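/- For every coloring c of the infinite Hex board, at most one player fulfills the standard winning condition: it is not the case that both Red and Blue fulfill the standard winning condition in c. -/

import Mathlib

/-- Hex adjacency on the infinite board `ℤ × ℤ`: `p` and `q` are adjacent iff
`q - p ∈ {(1,0), (-1,0), (0,1), (0,-1), (1,1), (-1,-1)}`. -/
def HexAdj (p q : ℤ × ℤ) : Prop :=
  q - p ∈ ({(1, 0), (-1, 0), (0, 1), (0, -1), (1, 1), (-1, -1)} : Set (ℤ × ℤ))

/-- A red `ℤ`-chain of the coloring `c`. -/
def IsRedChain (c : ℤ × ℤ → Option Bool) (f : ℤ → ℤ × ℤ) : Prop :=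
  ∀ n : ℤ, HexAdj (f n) (f (n + 1)) ∧ c (f n) = some true

/-- A blue `ℤ`-chain of the coloring `c`. -/
def IsBlueChain (c : ℤ × ℤ → Option Bool) (f : ℤ → ℤ × ℤ) : Prop :=
  ∀ n : ℤ, HexAdj (f n) (f (n + 1)) ∧ c (f n) = some false

/-- The convergence requirement for a winning red chain: for every `(a,b)` the positive
end eventually has both coordinates `> a`, `> b`, and the negative end `< a`, `< b`. -/
def RedConverges (f : ℤ → ℤ × ℤ) : Prop :=
  ∀ a b : ℤ, ∃ N : ℕ, ∀ n : ℕ, N ≤ n →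
    a < (f n).1 ∧ b < (f n).2 ∧ (f (-(n : ℤ))).1 < a ∧ (f (-(n : ℤ))).2 < b

/-- The convergence requirement for a winning blue chain. -/
def BlueConverges (f : ℤ → ℤ × ℤ) : Prop :=
  ∀ a b : ℤ, ∃ N : ℕ, ∀ n : ℕ, N ≤ n →
    (f n).1 < a ∧ b < (f n).2 ∧ a < (f (-(n : ℤ))).1 ∧ (f (-(n : ℤ))).2 < b

/-- Red fulfills the standard winning condition in the coloring `c`. -/
def RedWinsStd (c : ℤ × ℤ → Option Bool) : Prop :=
  ∃ f : ℤ → ℤ × ℤ, IsRedChain c f ∧ RedConverges f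

/-- Blue fulfills the standard winning condition in the coloring `c`. -/
def BlueWinsStd (c : ℤ × ℤ → Option Bool) : Prop :=
  ∃ f : ℤ → ℤ × ℤ, IsBlueChain c f ∧ BlueConverges f

/-!
A cell `p` off the blue chain `g` gets a parity: the number of edges of `g` crossing the
horizontal ray running left from `(p.1, p.2 - 1/2)`, mod 2. Since the triangular grid is planar
and `g` runs from `y = -∞` to `y = +∞`, this parity does not change across an edge with both ends
off `g`: the crossings gained and lost between the two rays are the boundary terms of a
telescoping sum along `g`. A red chain never meets `g`, so its cells all have the same parity;
but a red cell far to the south-west has parity `0` (the ray misses `g`) and one far to the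
north-east has parity `1` (the ray meets `g` exactly where `g` passes from below to above its
line).
-/

open Filter Function

theorem Int.sum_Ico_sub {G : Type*} [AddCommGroup G] (v : ℤ → G) {a b : ℤ}
    (hab : a ≤ b) : ∑ m ∈ Finset.Ico a b, (v (m + 1) - v m) = v b - v a := by
  induction b, hab using Int.leInduction with
  | base => simp
  | succ n hn ih => rw [← Finset.sum_Ico_add_eq_sum_Ico_add_one hn, ih]; abel

theorem finsum_sub_succ_of_eventually_eq {G : Type*} [AddCommGroup G] {v : ℤ → G} {a b : G}
    (ha : ∀ᶠ m in atBot, v m = a) (hb : ∀ᶠ m in atTop, v m = b) :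
    ∑ᶠ m, (v (m + 1) - v m) = b - a := by
  obtain ⟨M, hM⟩ := eventually_atBot.1 ha
  obtain ⟨N, hN⟩ := eventually_atTop.1 hb
  have hsupp : support (fun m => v (m + 1) - v m) ⊆ Finset.Ico (min M N) (max M N) := by
    intro m hm
    rw [mem_support] at hm
    rw [Finset.coe_Ico, Set.mem_Ico]
    by_contra hout
    rcases not_and_or.1 hout with hlo | hhi
    · exact hm (by rw [hM m (by omega), hM (m + 1) (by omega), sub_self])
    · exact hm (by rw [hN m (by omega), hN (m + 1) (by omega), sub_self])
  rw [finsum_eq_sum_of_support_subset _ hsupp, Int.sum_Ico_sub _ min_le_max,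
    hM _ (min_le_left _ _), hN _ (le_max_right _ _)]

theorem exists_forall_le_imp_of_eventually_cofinite {ι : Type*} {P : ι → Prop} {v : ι → ℤ}
    {c : ℤ} (h : ∀ᶠ i in cofinite, P i ∨ v i < c) : ∃ Y, ∀ i, Y ≤ v i → P i := by
  obtain ⟨B, hB⟩ := ((eventually_cofinite.1 h).image v).bddAbove
  refine ⟨max B c + 1, fun i hi => by_contra fun hP => ?_⟩
  have hvB : v i ≤ B := hB (Set.mem_image_of_mem v (not_or.2 ⟨hP, by omega⟩))
  omega

theorem hexAdj_iff {p q : ℤ × ℤ} :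
    HexAdj p q ↔ (q.1 = p.1 + 1 ∧ q.2 = p.2) ∨ (q.1 = p.1 - 1 ∧ q.2 = p.2) ∨
      (q.1 = p.1 ∧ q.2 = p.2 + 1) ∨ (q.1 = p.1 ∧ q.2 = p.2 - 1) ∨
      (q.1 = p.1 + 1 ∧ q.2 = p.2 + 1) ∨ (q.1 = p.1 - 1 ∧ q.2 = p.2 - 1) := by
  simp only [HexAdj, Set.mem_insert_iff, Set.mem_singleton_iff, Prod.ext_iff, Prod.fst_sub,
    Prod.snd_sub]
  omega

theorem HexAdj.exists_eq_add {p q : ℤ × ℤ} (h : HexAdj p q) :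
    ∃ d ∈ ({(1, 0), (0, 1), (1, 1)} : Set (ℤ × ℤ)), q = p + d ∨ p = q + d := by
  simp only [HexAdj, Set.mem_insert_iff, Set.mem_singleton_iff] at h
  rcases h with h | h | h | h | h | h
  · exact ⟨(1, 0), by simp, Or.inl (eq_add_of_sub_eq' h)⟩
  · exact ⟨(1, 0), by simp, Or.inr (eq_add_of_sub_eq' (by rw [← neg_sub, h]; rfl))⟩
  · exact ⟨(0, 1), by simp, Or.inl (eq_add_of_sub_eq' h)⟩
  · exact ⟨(0, 1), by simp, Or.inr (eq_add_of_sub_eq' (by rw [← neg_sub, h]; rfl))⟩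
  · exact ⟨(1, 1), by simp, Or.inl (eq_add_of_sub_eq' h)⟩
  · exact ⟨(1, 1), by simp, Or.inr (eq_add_of_sub_eq' (by rw [← neg_sub, h]; rfl))⟩

/-- Whether the edge `a b` crosses the horizontal ray running left from `(p.1, p.2 - 1/2)`;
`a.1 + b.1` is twice the abscissa of the crossing with the line. -/
def rayCrossing (p a b : ℤ × ℤ) : ZMod 2 :=
  if ((a.2 = p.2 - 1 ∧ b.2 = p.2) ∨ (a.2 = p.2 ∧ b.2 = p.2 - 1)) ∧ a.1 + b.1 < 2 * p.1 then 1
  else 0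

/-- The cells strictly between the rays of `p` and of `q`. -/
def betweenRays (p q a : ℤ × ℤ) : ZMod 2 :=
  if p.2 ≤ a.2 ∧ a.2 < q.2 ∧ a.1 < q.1 then 1 else 0

theorem rayCrossing_add_rayCrossing {p d a b : ℤ × ℤ}
    (hd : d ∈ ({(1, 0), (0, 1), (1, 1)} : Set (ℤ × ℤ))) (hab : HexAdj a b)
    (hap : a ≠ p) (haq : a ≠ p + d) (hbp : b ≠ p) (hbq : b ≠ p + d) :
    rayCrossing p a b + rayCrossing (p + d) a b =
      betweenRays p (p + d) b - betweenRays p (p + d) a := by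
  obtain ⟨x, y⟩ := p
  obtain ⟨u, w⟩ := a
  rw [hexAdj_iff] at hab
  simp only [Set.mem_insert_iff, Set.mem_singleton_iff] at hd
  rcases hd with rfl | rfl | rfl <;>
  rcases hab with ⟨h1, h2⟩ | ⟨h1, h2⟩ | ⟨h1, h2⟩ | ⟨h1, h2⟩ | ⟨h1, h2⟩ | ⟨h1, h2⟩ <;>
  simp only [Prod.ext_iff, Prod.fst_add, Prod.snd_add, ne_eq] at hap haq hbp hbq h1 h2 <;>
  simp only [rayCrossing, betweenRays, Prod.fst_add, Prod.snd_add, h1, h2] <;>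
  split_ifs <;> first | decide | omega

theorem rayCrossing_eq_sub_of_left {p a b : ℤ × ℤ} (hab : HexAdj a b)
    (hb : p.2 - 1 ≤ b.2 → b.1 < p.1) :
    rayCrossing p a b = (if p.2 ≤ b.2 then 1 else 0) - (if p.2 ≤ a.2 then 1 else 0) := by
  rw [hexAdj_iff] at hab
  unfold rayCrossing
  rcases hab with ⟨h1, h2⟩ | ⟨h1, h2⟩ | ⟨h1, h2⟩ | ⟨h1, h2⟩ | ⟨h1, h2⟩ | ⟨h1, h2⟩ <;>
  rw [h2] <;> split_ifs <;> first | decide | omega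

theorem rayCrossing_eq_zero_of_right {p a b : ℤ × ℤ}
    (ha : a.2 ≤ p.2 → p.1 < a.1) (hb : b.2 ≤ p.2 → p.1 < b.1) : rayCrossing p a b = 0 := by
  unfold rayCrossing
  split_ifs <;> first | rfl | omega

section CrossingParity

variable {g : ℤ → ℤ × ℤ}

noncomputable def crossingParity (g : ℤ → ℤ × ℤ) (p : ℤ × ℤ) : ZMod 2 :=
  ∑ᶠ m, rayCrossing p (g m) (g (m + 1))

theorem hasFiniteSupport_rayCrossing (hbot : Tendsto (fun m => (g m).2) atBot atBot)
    (htop : Tendsto (fun m => (g m).2) atTop atTop) (p : ℤ × ℤ) :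
    HasFiniteSupport fun m => rayCrossing p (g m) (g (m + 1)) := by
  have hfar : ∀ᶠ m in cofinite, (g m).2 < p.2 - 1 ∨ p.2 < (g m).2 := by
    rw [Int.cofinite_eq, eventually_sup]
    exact ⟨(hbot.eventually_lt_atBot _).mono fun _ => Or.inl,
      (htop.eventually_gt_atTop _).mono fun _ => Or.inr⟩
  refine (eventually_cofinite.1 hfar).subset fun m hm => ?_
  simp only [mem_support, rayCrossing, ne_eq, ite_eq_right_iff, Classical.not_imp] at hm
  simp only [Set.mem_ofPred_eq]
  omega

theorem crossingParity_add_crossingParity (hadj : ∀ m, HexAdj (g m) (g (m + 1)))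
    (hbot : Tendsto (fun m => (g m).2) atBot atBot)
    (htop : Tendsto (fun m => (g m).2) atTop atTop) {p d : ℤ × ℤ}
    (hd : d ∈ ({(1, 0), (0, 1), (1, 1)} : Set (ℤ × ℤ)))
    (hp : p ∉ Set.range g) (hq : p + d ∉ Set.range g) :
    crossingParity g p + crossingParity g (p + d) = 0 := by
  have hloc (m : ℤ) : rayCrossing p (g m) (g (m + 1)) + rayCrossing (p + d) (g m) (g (m + 1)) =
      betweenRays p (p + d) (g (m + 1)) - betweenRays p (p + d) (g m) :=
    rayCrossing_add_rayCrossing hd (hadj m) (fun h => hp ⟨m, h⟩) (fun h => hq ⟨m, h⟩)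
      (fun h => hp ⟨m + 1, h⟩) (fun h => hq ⟨m + 1, h⟩)
  rw [crossingParity, crossingParity,
    ← finsum_add_distrib (hasFiniteSupport_rayCrossing hbot htop _)
      (hasFiniteSupport_rayCrossing hbot htop _), finsum_congr hloc,
    finsum_sub_succ_of_eventually_eq (v := fun m => betweenRays p (p + d) (g m)) (a := 0) (b := 0),
    sub_zero]
  · exact (hbot.eventually_lt_atBot p.2).mono fun m hm => if_neg (by omega)
  · exact (htop.eventually_ge_atTop (p + d).2).mono fun m hm => if_neg (by omega)

theorem crossingParity_eq_of_hexAdj (hadj : ∀ m, HexAdj (g m) (g (m + 1)))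
    (hbot : Tendsto (fun m => (g m).2) atBot atBot)
    (htop : Tendsto (fun m => (g m).2) atTop atTop) {p q : ℤ × ℤ} (hpq : HexAdj p q)
    (hp : p ∉ Set.range g) (hq : q ∉ Set.range g) :
    crossingParity g p = crossingParity g q := by
  obtain ⟨d, hd, rfl | rfl⟩ := hpq.exists_eq_add
  · exact CharTwo.add_eq_zero.1 (crossingParity_add_crossingParity hadj hbot htop hd hp hq)
  · exact (CharTwo.add_eq_zero.1 (crossingParity_add_crossingParity hadj hbot htop hd hq hp)).symm

theorem crossingParity_eq_one (hadj : ∀ m, HexAdj (g m) (g (m + 1)))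
    (hbot : Tendsto (fun m => (g m).2) atBot atBot)
    (htop : Tendsto (fun m => (g m).2) atTop atTop) {p : ℤ × ℤ}
    (hleft : ∀ m, p.2 - 1 ≤ (g m).2 → (g m).1 < p.1) :
    crossingParity g p = 1 := by
  rw [crossingParity, finsum_congr fun m => rayCrossing_eq_sub_of_left (hadj m) (hleft (m + 1)),
    finsum_sub_succ_of_eventually_eq (v := fun m => if p.2 ≤ (g m).2 then 1 else 0) (a := 0)
      (b := 1), sub_zero]
  · exact (hbot.eventually_lt_atBot p.2).mono fun m hm => if_neg (by omega)
  · exact (htop.eventually_ge_atTop p.2).mono fun m hm => if_pos hm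

theorem crossingParity_eq_zero {p : ℤ × ℤ} (hright : ∀ m, (g m).2 ≤ p.2 → p.1 < (g m).1) :
    crossingParity g p = 0 := by
  simp [crossingParity, rayCrossing_eq_zero_of_right (hright _) (hright _)]

end CrossingParity

namespace BlueConverges

variable {g : ℤ → ℤ × ℤ}

theorem eventually_atTop (hg : BlueConverges g) (a b : ℤ) :
    ∀ᶠ m in atTop, (g m).1 < a ∧ b < (g m).2 := by
  obtain ⟨N, hN⟩ := hg a b
  filter_upwards [eventually_ge_atTop (N : ℤ)] with m hm
  lift m to ℕ using by omega
  exact ⟨(hN m (by omega)).1, (hN m (by omega)).2.1⟩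

theorem eventually_atBot (hg : BlueConverges g) (a b : ℤ) :
    ∀ᶠ m in atBot, a < (g m).1 ∧ (g m).2 < b := by
  obtain ⟨N, hN⟩ := hg a b
  filter_upwards [eventually_le_atBot (-N : ℤ)] with m hm
  obtain ⟨n, rfl⟩ : ∃ n : ℕ, m = -n := ⟨m.natAbs, by omega⟩
  exact ⟨(hN n (by omega)).2.2.1, (hN n (by omega)).2.2.2⟩

theorem tendsto_snd_atTop (hg : BlueConverges g) : Tendsto (fun m => (g m).2) atTop atTop :=
  tendsto_atTop.2 fun b => (hg.eventually_atTop 0 b).mono fun _ h => h.2.le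

theorem tendsto_snd_atBot (hg : BlueConverges g) : Tendsto (fun m => (g m).2) atBot atBot :=
  tendsto_atBot.2 fun b => (hg.eventually_atBot 0 b).mono fun _ h => h.2.le

theorem exists_fst_lt_of_le_snd (hg : BlueConverges g) (x : ℤ) :
    ∃ Y, ∀ m, Y ≤ (g m).2 → (g m).1 < x := by
  refine exists_forall_le_imp_of_eventually_cofinite (c := 0) ?_
  rw [Int.cofinite_eq, eventually_sup]
  exact ⟨(hg.eventually_atBot x 0).mono fun _ h => Or.inr h.2,
    (hg.eventually_atTop x 0).mono fun _ h => Or.inl h.1⟩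

theorem exists_lt_fst_of_snd_le (hg : BlueConverges g) (x : ℤ) :
    ∃ Y, ∀ m, (g m).2 ≤ Y → x < (g m).1 := by
  obtain ⟨Y, hY⟩ := exists_forall_le_imp_of_eventually_cofinite (v := fun m => -(g m).2)
    (P := fun m => x < (g m).1) (c := 0) <| by
    rw [Int.cofinite_eq, eventually_sup]
    exact ⟨(hg.eventually_atBot x 0).mono fun _ h => Or.inl h.1,
      (hg.eventually_atTop x 0).mono fun _ h => Or.inr (by omega)⟩
  exact ⟨-Y, fun m hm => hY m (by omega)⟩

end BlueConverges

/-- In every coloring of the infinite Hex board, at most one player fulfills the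
standard winning condition. -/
theorem infinite_hex_at_most_one_winner (c : ℤ × ℤ → Option Bool) :
    ¬ (RedWinsStd c ∧ BlueWinsStd c) := by
  rintro ⟨⟨f, hf, hfc⟩, g, hg, hgc⟩
  have hadj (m : ℤ) : HexAdj (g m) (g (m + 1)) := (hg m).1
  have hbot := hgc.tendsto_snd_atBot
  have htop := hgc.tendsto_snd_atTop
  have hoff (n : ℤ) : f n ∉ Set.range g := by
    rintro ⟨m, hm⟩
    simpa [hm, (hf n).2] using (hg m).2
  have hper : Periodic (fun n => crossingParity g (f n)) 1 := fun n =>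
    (crossingParity_eq_of_hexAdj hadj hbot htop (hf n).1 (hoff n) (hoff (n + 1))).symm
  have hconst (n : ℤ) : crossingParity g (f n) = crossingParity g (f 0) := by
    simpa using hper.int_mul_eq n
  obtain ⟨Yt, hYt⟩ := hgc.exists_fst_lt_of_le_snd 0
  obtain ⟨Yb, hYb⟩ := hgc.exists_lt_fst_of_snd_le 0
  obtain ⟨N, hN⟩ := hfc 0 (Yt + 1)
  obtain ⟨M, hM⟩ := hfc 0 Yb
  have hNE : crossingParity g (f N) = 1 := by
    have hfN := hN N le_rfl
    exact crossingParity_eq_one hadj hbot htop fun m hm => (hYt m (by omega)).trans hfN.1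
  have hSW : crossingParity g (f (-M)) = 0 := by
    have hfM := hM M le_rfl
    exact crossingParity_eq_zero fun m hm => hfM.2.2.1.trans (hYb m (by omega))
  rw [hconst] at hNE hSW
  exact zero_ne_one (hSW.symm.trans hNE)
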